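/- Let k ∈ ℝ³, regarded as an element of ℂ³. Suppose â : [0, ∞) → ℂ and Ĝ : [0, ∞) → ℂ³ are differentiable, Ê, Ĥ : [0, ∞) → ℂ³, and for every t ≥ 0: ∂ₜâ(t) + i k·Ĝ(t) = 0, ∂ₜĜ(t) + i k â(t) − 2 Ê(t) + Ĥ(t) = 0, and i k·Ê(t) = â(t) (where k·v = Σⱼ kⱼ vⱼ is the bilinear dot product). Then for every t ≥ 0, d/dt ( (Ĝ(t) | i k â(t)) ) + (2 + |k|²) |â(t)|² = (Ĝ(t) | k (k·Ĝ(t))) − (Ĥ(t) | i k â(t)). -/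

import Mathlib

open Complex Set

/-- The Hermitian dot product `(a | b) = Σⱼ aⱼ conj(bⱼ)` on ℂ³. -/
noncomputable def herm (a b : Fin 3 → ℂ) : ℂ := ∑ j : Fin 3, a j * (starRingEnd ℂ) (b j)

/-- A real vector `k ∈ ℝ³` regarded as an element of ℂ³. -/
def cvec (k : Fin 3 → ℝ) : Fin 3 → ℂ := fun j => (k j : ℂ)

/-!
Taking the bilinear product of the moment equation with `k` turns every term into a multiple of
`k·Ĝ`, `k·Ê` or `k·Ĥ`. Gauss's law replaces `i k·Ê` by `â` and the continuity equation replaces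
`∂ₜâ` by `-i k·Ĝ`, so `d/dt (Ĝ | ikâ)` becomes `|k·Ĝ|² - (Ĥ | ikâ) - (2 + |k|²)|â|²`.
-/

theorem herm_cvec_mul (u : Fin 3 → ℂ) (k : Fin 3 → ℝ) (c : ℂ) :
    herm u (fun j => cvec k j * c) = (∑ j, cvec k j * u j) * (starRingEnd ℂ) c := by
  simp only [herm, cvec, map_mul, conj_ofReal, Finset.sum_mul]
  exact Finset.sum_congr rfl fun j _ => by ring

theorem sum_cvec_mul_eq_of_moment_eq {k : Fin 3 → ℝ} {a : ℂ} {g' e h : Fin 3 → ℂ}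
    (hmom : ∀ j, g' j + I * cvec k j * a - 2 * e j + h j = 0) :
    ∑ j, cvec k j * g' j
      = 2 * ∑ j, cvec k j * e j - ∑ j, cvec k j * h j - I * ((∑ j, k j ^ 2 : ℝ) : ℂ) * a := by
  have h0 := hmom 0
  have h1 := hmom 1
  have h2 := hmom 2
  simp only [cvec, Fin.sum_univ_three] at h0 h1 h2 ⊢
  push_cast
  linear_combination (k 0 : ℂ) * h0 + (k 1 : ℂ) * h1 + (k 2 : ℂ) * h2

theorem HasDerivWithinAt.herm {u v : ℝ → Fin 3 → ℂ} {u' v' : Fin 3 → ℂ} {s : Set ℝ} {t : ℝ}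
    (hu : HasDerivWithinAt u u' s t) (hv : HasDerivWithinAt v v' s t) :
    HasDerivWithinAt (fun x => _root_.herm (u x) (v x))
      (_root_.herm u' (v t) + _root_.herm (u t) v') s t := by
  simp only [_root_.herm, ← Finset.sum_add_distrib]
  refine HasDerivWithinAt.fun_sum fun j _ => ?_
  exact (hasDerivWithinAt_pi.mp hu j).mul (hasDerivWithinAt_pi.mp hv j).star

theorem stmt_18 (k : Fin 3 → ℝ) (a a' : ℝ → ℂ) (G G' E H : ℝ → Fin 3 → ℂ)
    (ha : ∀ t ∈ Set.Ici (0 : ℝ), HasDerivWithinAt a (a' t) (Set.Ici 0) t)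
    (hG : ∀ t ∈ Set.Ici (0 : ℝ), HasDerivWithinAt G (G' t) (Set.Ici 0) t)
    (heq1 : ∀ t ∈ Set.Ici (0 : ℝ),
      a' t + Complex.I * (∑ j : Fin 3, cvec k j * G t j) = 0)
    (heq2 : ∀ t ∈ Set.Ici (0 : ℝ), ∀ j : Fin 3,
      G' t j + Complex.I * cvec k j * a t - 2 * E t j + H t j = 0)
    (heq3 : ∀ t ∈ Set.Ici (0 : ℝ),
      Complex.I * (∑ j : Fin 3, cvec k j * E t j) = a t) :
    ∀ t ∈ Set.Ici (0 : ℝ),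
      HasDerivWithinAt
        (fun s => herm (G s) (fun j => Complex.I * cvec k j * a s))
        (herm (G t) (fun j => cvec k j * (∑ m : Fin 3, cvec k m * G t m))
          - herm (H t) (fun j => Complex.I * cvec k j * a t)
          - (((2 : ℝ) + ∑ j : Fin 3, (k j) ^ 2 : ℝ) : ℂ) * (Complex.normSq (a t) : ℂ))
        (Set.Ici 0) t := by
  intro t ht
  have hIka : ∀ c : ℂ, (fun j => I * cvec k j * c) = fun j => cvec k j * (I * c) :=
    fun c => funext fun j => by ring
  have hdot := sum_cvec_mul_eq_of_moment_eq (heq2 t ht)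
  have hv : HasDerivWithinAt (fun s j => I * cvec k j * a s) (fun j => I * cvec k j * a' t)
      (Ici 0) t :=
    hasDerivWithinAt_pi.mpr fun j => (ha t ht).const_mul (I * cvec k j)
  convert (hG t ht).herm hv using 1
  have ha' : a' t = -(I * ∑ j, cvec k j * G t j) := eq_neg_of_add_eq_zero_left (heq1 t ht)
  simp only [hIka, herm_cvec_mul, hdot, ha', map_neg, map_mul, conj_I, ← mul_conj (a t)]
  push_cast
  linear_combination 2 * (starRingEnd ℂ) (a t) * heq3 t ht
    + ((∑ j, cvec k j * G t j) * (starRingEnd ℂ) (∑ j, cvec k j * G t j)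
      - (∑ j, k j ^ 2 : ℂ) * a t * (starRingEnd ℂ) (a t)) * I_sq
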